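/- Each v i is an extreme point of the convex-form space of the hexagon: for every i ∈ Fin 6, v i ∈ Set.extremePoints ℝ OC, where OC = {f : ℝ² →ᵃ[ℝ] ℝ | ∀ x ∈ C, f x ∈ Set.Icc 0 1}. -/

import Mathlib

noncomputable section

/-- The vertices of a regular hexagon in `ℝ²`. -/
def s (j : Fin 6) : ℝ × ℝ :=
  (Real.cos (((j : ℕ) + 1 : ℝ) * Real.pi / 3), Real.sin (((j : ℕ) + 1 : ℝ) * Real.pi / 3))

/-- The hexagon. -/
def C : Set (ℝ × ℝ) := convexHull ℝ {s 0, s 1, s 2, s 3, s 4, s 5}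

/-- The prescribed vertex values of the hexagon's extreme convex forms:
`v i (s j) = 1` if `j ∈ {i, i+1}`, `v i (s j) = 1/2` if `j ∈ {i-1, i+2}`, and
`v i (s j) = 0` if `j ∈ {i+3, i+4}` (indices cyclic in `Fin 6`). -/
def IsHexForms (v : Fin 6 → ((ℝ × ℝ) →ᵃ[ℝ] ℝ)) : Prop :=
  ∀ i : Fin 6,
    v i (s i) = 1 ∧ v i (s (i + 1)) = 1 ∧
    v i (s (i - 1)) = 1 / 2 ∧ v i (s (i + 2)) = 1 / 2 ∧
    v i (s (i + 3)) = 0 ∧ v i (s (i + 4)) = 0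

/-- The convex-form space of the hexagon. -/
def OC : Set ((ℝ × ℝ) →ᵃ[ℝ] ℝ) := {f | ∀ x ∈ C, f x ∈ Set.Icc 0 1}

/-!
The form `v i` takes the value `1` at `s i`, `s (i + 1)` and the value `0` at `s (i + 3)`.
Since `0` and `1` are extreme points of `[0, 1]`, any two forms of `OC` having `v i` in the
interior of their segment must take the same values there; as these three vertices are affinely
independent, both forms coincide with `v i`.
-/

open Real Set

section AffineForms

variable {V P : Type*} [AddCommGroup V] [Module ℝ V] [AddTorsor V P]

theorem AffineMap.apply_mem_openSegment {f g w : P →ᵃ[ℝ] ℝ} (h : w ∈ openSegment ℝ f g)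
    (x : P) : w x ∈ openSegment ℝ (f x) (g x) := by
  obtain ⟨a, b, ha, hb, hab, rfl⟩ := h
  exact ⟨a, b, ha, hb, hab, by simp⟩

theorem AffineMap.mem_extremePoints_of_affineSpan_eq_top {C S : Set P} {w : P →ᵃ[ℝ] ℝ}
    (hw : ∀ x ∈ C, w x ∈ Icc 0 1) (hSC : S ⊆ C) (hS : affineSpan ℝ S = ⊤)
    (hw01 : ∀ x ∈ S, w x = 0 ∨ w x = 1) :
    w ∈ extremePoints ℝ {f : P →ᵃ[ℝ] ℝ | ∀ x ∈ C, f x ∈ Icc 0 1} := by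
  refine ⟨hw, fun f hf g hg hfg => ext_on hS fun x hx => ?_⟩
  have hext : w x ∈ extremePoints ℝ (Icc (0 : ℝ) 1) := by
    rw [extremePoints_Icc zero_le_one]
    exact hw01 x hx
  exact hext.2 (hf x (hSC hx)) (hg x (hSC hx)) (apply_mem_openSegment hfg x)

end AffineForms

theorem Prod.span_pair_eq_top_of_det_ne_zero {u w : ℝ × ℝ} (h : u.1 * w.2 - u.2 * w.1 ≠ 0) :
    Submodule.span ℝ {u, w} = ⊤ := by
  obtain ⟨a, b⟩ := u
  obtain ⟨c, d⟩ := w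
  dsimp only at h
  refine Submodule.eq_top_iff'.2 fun ⟨x, y⟩ => Submodule.mem_span_pair.2 ?_
  refine ⟨(x * d - y * c) / (a * d - b * c), (a * y - b * x) / (a * d - b * c), ?_⟩
  simp only [Prod.smul_mk, Prod.mk_add_mk, smul_eq_mul, Prod.mk.injEq]
  constructor <;> rw [div_mul_eq_mul_div, div_mul_eq_mul_div, ← add_div, div_eq_iff h] <;>
    ring

theorem Prod.affineSpan_triple_eq_top_of_det_ne_zero {p q r : ℝ × ℝ}
    (h : (q - p).1 * (r - p).2 - (q - p).2 * (r - p).1 ≠ 0) :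
    affineSpan ℝ {p, q, r} = ⊤ := by
  rw [AffineSubspace.affineSpan_eq_top_iff_vectorSpan_eq_top_of_nonempty _ _ _
    (insert_nonempty _ _), eq_top_iff, ← span_pair_eq_top_of_det_ne_zero h,
    Submodule.span_le, pair_subset_iff]
  exact ⟨vsub_mem_vectorSpan ℝ (by simp) (by simp), vsub_mem_vectorSpan ℝ (by simp) (by simp)⟩

theorem s_zero : s 0 = (1 / 2, √3 / 2) := by
  rw [s, show (((0 : Fin 6) : ℕ) + 1 : ℝ) * π / 3 = π / 3 by simp, cos_pi_div_three,
    sin_pi_div_three]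

theorem s_one : s 1 = (-(1 / 2), √3 / 2) := by
  rw [s, show (((1 : Fin 6) : ℕ) + 1 : ℝ) * π / 3 = π - π / 3 by simp; ring, cos_pi_sub,
    sin_pi_sub, cos_pi_div_three, sin_pi_div_three]

theorem s_two : s 2 = (-1, 0) := by
  rw [s, show (((2 : Fin 6) : ℕ) + 1 : ℝ) * π / 3 = π by simp; ring, cos_pi, sin_pi]

theorem s_three : s 3 = (-(1 / 2), -(√3 / 2)) := by
  rw [s, show (((3 : Fin 6) : ℕ) + 1 : ℝ) * π / 3 = π / 3 + π by simp; ring, cos_add_pi,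
    sin_add_pi, cos_pi_div_three, sin_pi_div_three]

theorem s_four : s 4 = (1 / 2, -(√3 / 2)) := by
  rw [s, show (((4 : Fin 6) : ℕ) + 1 : ℝ) * π / 3 = 2 * π - π / 3 by simp; ring,
    cos_two_pi_sub, sin_two_pi_sub, cos_pi_div_three, sin_pi_div_three]

theorem s_five : s 5 = (1, 0) := by
  rw [s, show (((5 : Fin 6) : ℕ) + 1 : ℝ) * π / 3 = 2 * π by simp; ring, cos_two_pi,
    sin_two_pi]

theorem affineSpan_s_triple_eq_top (i : Fin 6) : affineSpan ℝ {s i, s (i + 1), s (i + 3)} = ⊤ :=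
  Prod.affineSpan_triple_eq_top_of_det_ne_zero <| by
    fin_cases i <;> simp [s_zero, s_one, s_two, s_three, s_four, s_five] <;> ring_nf <;> simp

theorem s_mem_C (j : Fin 6) : s j ∈ C :=
  subset_convexHull ℝ _ (by fin_cases j <;> simp)

theorem mem_OC_of_forall_vertex {f : (ℝ × ℝ) →ᵃ[ℝ] ℝ} (hf : ∀ j, f (s j) ∈ Icc 0 1) :
    f ∈ OC := fun _ hx =>
  convexHull_min (by simp [insert_subset_iff, hf]) ((convex_Icc 0 1).affine_preimage f) hx

theorem Fin.eq_or_eq_add_of_six (i j : Fin 6) :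
    j = i ∨ j = i + 1 ∨ j = i - 1 ∨ j = i + 2 ∨ j = i + 3 ∨ j = i + 4 := by
  revert i j; decide

/-- Each `v i` is an extreme point of the convex-form space of the hexagon. -/
theorem forms_extremePoints_OC :
    ∀ v : Fin 6 → ((ℝ × ℝ) →ᵃ[ℝ] ℝ), IsHexForms v →
      ∀ i : Fin 6, v i ∈ Set.extremePoints ℝ OC := by
  intro v hv i
  obtain ⟨hi, hi₁, hprev, hi₂, hi₃, hi₄⟩ := hv i
  have hOC : v i ∈ OC := mem_OC_of_forall_vertex fun j => by
    rcases Fin.eq_or_eq_add_of_six i j with rfl | rfl | rfl | rfl | rfl | rfl <;>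
      norm_num [hi, hi₁, hprev, hi₂, hi₃, hi₄]
  refine AffineMap.mem_extremePoints_of_affineSpan_eq_top hOC
    (by simp [insert_subset_iff, s_mem_C]) (affineSpan_s_triple_eq_top i) ?_
  simp [hi, hi₁, hi₃]
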